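/- arXiv:2605.05656 — 4 statements merged into one kernel-verified Lean document; each statement's English description precedes it below -/
import Mathlib

section
/- Let Θ ⊆ ℝ^p and Λ ⊆ ℝ^q be open sets, and let Φ : Θ × Λ → ℝ^{K+1} be a C^∞ map with K + 1 > 2p. Define G on the set {(θ₁, θ₂, λ) ∈ Θ × Θ × Λ : θ₁ ≠ θ₂} by G(θ₁, θ₂, λ) = Φ(θ₁, λ) − Φ(θ₂, λ). If 0 is a regular value of G (the Fréchet derivative of G is surjective at every zero of G), then the set of λ ∈ Λ such that the map θ ↦ Φ(θ, λ) is injective on Θ is comeagre in Λ. -/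
open Set Topology Module Filter
open scoped ENNReal

/-- Local structure of the zero set of a map with surjective derivative: near a zero `z`,
the image of the zero set under a continuous linear map `π` has Hausdorff dimension at most
the dimension of the kernel of the derivative. -/
lemma aux_local_dimH {E F G : Type*}
    [NormedAddCommGroup E] [NormedSpace ℝ E] [FiniteDimensional ℝ E]
    [NormedAddCommGroup F] [NormedSpace ℝ F] [FiniteDimensional ℝ F]
    [NormedAddCommGroup G] [NormedSpace ℝ G]
    (f : E → F) (π : E →L[ℝ] G) (Z : Set E) (z : E)
    (hf0 : ∀ x ∈ Z, f x = 0) (hfz : f z = 0)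
    (hcd : ContDiffAt ℝ (⊤ : ℕ∞) f z)
    (hsurj : Function.Surjective (fderiv ℝ f z)) (m : ℕ)
    (hm : finrank ℝ (fderiv ℝ f z).ker ≤ m) :
    ∃ W, IsOpen W ∧ z ∈ W ∧ dimH (π '' (Z ∩ W)) ≤ (m : ℝ≥0∞) := by
  set f' := fderiv ℝ f z with hf'def
  have hstrict : HasStrictFDerivAt f f' z := hcd.hasStrictFDerivAt (by simp)
  have hrange : f'.range = ⊤ := LinearMap.range_eq_top.2 hsurj
  obtain ⟨c, t, htmem, hlip⟩ :=
    (hstrict.to_implicitFunction hrange).exists_lipschitzOnWith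
  obtain ⟨t', ht'sub, ht'open, ht'mem⟩ := mem_nhds_iff.1 htmem
  set φ := hstrict.implicitToOpenPartialHomeomorph f f' hrange with hφdef
  have hzsrc : z ∈ φ.source := hstrict.mem_implicitToOpenPartialHomeomorph_source hrange
  have hcont : ContinuousOn (fun x => (φ x).2) φ.source :=
    continuous_snd.comp_continuousOn φ.continuousOn
  set W := φ.source ∩ (fun x => (φ x).2) ⁻¹' t' with hWdef
  have hWopen : IsOpen W := hcont.isOpen_inter_preimage φ.open_source ht'open
  have hφz : φ z = (f z, 0) := hstrict.implicitToOpenPartialHomeomorph_self hrange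
  have hzW : z ∈ W := by
    refine ⟨hzsrc, ?_⟩
    show (φ z).2 ∈ t'
    rw [hφz]
    exact ht'mem
  set g := hstrict.implicitFunction f f' hrange with hgdef
  have hsub : Z ∩ W ⊆ g (f z) '' t := by
    rintro x ⟨hxZ, hxsrc, hxt'⟩
    refine ⟨(φ x).2, ht'sub hxt', ?_⟩
    have h1 : (f z, (φ x).2) = φ x := by
      have hfst : (φ x).1 = f x :=
        hstrict.implicitToOpenPartialHomeomorph_fst hrange x
      rw [Prod.ext_iff]
      exact ⟨by rw [hfst, hf0 x hxZ, hfz], rfl⟩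
    have h2 : g (f z) (φ x).2 = φ.symm (f z, (φ x).2) := rfl
    rw [h2, h1]
    exact φ.left_inv hxsrc
  refine ⟨W, hWopen, hzW, ?_⟩
  have himg : π '' (Z ∩ W) ⊆ (⇑π ∘ g (f z)) '' t := by
    rw [Set.image_comp]
    exact Set.image_mono hsub
  have hlip2 : LipschitzOnWith (‖π‖₊ * c) (⇑π ∘ g (f z)) t :=
    π.lipschitz.comp_lipschitzOnWith hlip
  calc dimH (π '' (Z ∩ W)) ≤ dimH ((⇑π ∘ g (f z)) '' t) := dimH_mono himg
    _ ≤ dimH t := hlip2.dimH_image_le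
    _ ≤ dimH (univ : Set f'.ker) := dimH_mono (subset_univ _)
    _ = finrank ℝ f'.ker := Real.dimH_univ_eq_finrank _
    _ ≤ (m : ℝ≥0∞) := Nat.cast_le.2 hm

/-- **Generic identifiability.** Let `Φ : Θ × Λ → ℝ^(K+1)` be `C^∞` with
`K + 1 > 2p`, and let `G(θ₁, θ₂, λ) = Φ(θ₁, λ) − Φ(θ₂, λ)` on the set of
triples with `θ₁ ≠ θ₂`.  If `0` is a regular value of `G`, then the set of
`λ ∈ Λ` for which `θ ↦ Φ(θ, λ)` is injective on `Θ` is comeagre in `Λ`. -/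
theorem generic_identifiability (p q K : ℕ) (hK : 2 * p < K + 1)
    (Θ : Set (Fin p → ℝ)) (Λ : Set (Fin q → ℝ))
    (hΘ : IsOpen Θ) (hΛ : IsOpen Λ)
    (Φ : (Fin p → ℝ) × (Fin q → ℝ) → (Fin (K + 1) → ℝ))
    (hΦ : ContDiffOn ℝ (⊤ : ℕ∞) Φ (Θ ×ˢ Λ))
    (hreg : ∀ z : (Fin p → ℝ) × (Fin p → ℝ) × (Fin q → ℝ),
      z.1 ∈ Θ → z.2.1 ∈ Θ → z.2.2 ∈ Λ → z.1 ≠ z.2.1 →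
      Φ (z.1, z.2.2) - Φ (z.2.1, z.2.2) = 0 →
      Function.Surjective (fderiv ℝ
        (fun w : (Fin p → ℝ) × (Fin p → ℝ) × (Fin q → ℝ) =>
          Φ (w.1, w.2.2) - Φ (w.2.1, w.2.2)) z)) :
    {l : Fin q → ℝ | l ∈ Λ → Set.InjOn (fun θ => Φ (θ, l)) Θ} ∈
      residual (Fin q → ℝ) := by
  classical
  set E := ((Fin p → ℝ) × (Fin p → ℝ) × (Fin q → ℝ)) with hEdef
  set f : E → (Fin (K + 1) → ℝ) :=
    fun w => Φ (w.1, w.2.2) - Φ (w.2.1, w.2.2) with hfdef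
  set U : Set E :=
    {w | w.1 ∈ Θ ∧ w.2.1 ∈ Θ ∧ w.2.2 ∈ Λ ∧ w.1 ≠ w.2.1} with hUdef
  set Z : Set E := {w ∈ U | f w = 0} with hZdef
  set π : E → (Fin q → ℝ) := fun w => w.2.2 with hπdef
  set B : Set (Fin q → ℝ) :=
    {l | l ∈ Λ ∧ ¬ Set.InjOn (fun θ => Φ (θ, l)) Θ} with hBdef
  -- the bad set is contained in the projection of Z
  have hBZ : B ⊆ π '' Z := by
    rintro l ⟨hlΛ, hnotinj⟩
    rw [Set.InjOn] at hnotinj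
    push_neg at hnotinj
    obtain ⟨θ₁, hθ₁, θ₂, hθ₂, heq, hne⟩ := hnotinj
    refine ⟨(θ₁, θ₂, l), ⟨⟨hθ₁, hθ₂, hlΛ, hne⟩, ?_⟩, rfl⟩
    show Φ (θ₁, l) - Φ (θ₂, l) = 0
    rw [sub_eq_zero]
    exact heq
  -- U is open
  have hUopen : IsOpen U := by
    have h1 : IsOpen {w : E | w.1 ∈ Θ} := hΘ.preimage continuous_fst
    have h2 : IsOpen {w : E | w.2.1 ∈ Θ} :=
      hΘ.preimage (continuous_fst.comp continuous_snd)
    have h3 : IsOpen {w : E | w.2.2 ∈ Λ} :=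
      hΛ.preimage (continuous_snd.comp continuous_snd)
    have h4 : IsOpen {w : E | w.1 ≠ w.2.1} :=
      isOpen_ne_fun continuous_fst (continuous_fst.comp continuous_snd)
    have : U = {w : E | w.1 ∈ Θ} ∩ ({w : E | w.2.1 ∈ Θ} ∩
        ({w : E | w.2.2 ∈ Λ} ∩ {w : E | w.1 ≠ w.2.1})) := by
      ext w; simp [hUdef, and_assoc]
    rw [this]
    exact h1.inter (h2.inter (h3.inter h4))
  -- f is smooth at each point of U
  have hfcd : ∀ z ∈ U, ContDiffAt ℝ (⊤ : ℕ∞) f z := by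
    intro z hz
    have hj1 : ContDiff ℝ (⊤ : ℕ∞) (fun w : E => (w.1, w.2.2)) :=
      contDiff_fst.prodMk (contDiff_snd.comp contDiff_snd)
    have hj2 : ContDiff ℝ (⊤ : ℕ∞) (fun w : E => (w.2.1, w.2.2)) :=
      (contDiff_fst.comp contDiff_snd).prodMk (contDiff_snd.comp contDiff_snd)
    have hmem1 : (z.1, z.2.2) ∈ Θ ×ˢ Λ := ⟨hz.1, hz.2.2.1⟩
    have hmem2 : (z.2.1, z.2.2) ∈ Θ ×ˢ Λ := ⟨hz.2.1, hz.2.2.1⟩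
    have hΦ1 : ContDiffAt ℝ (⊤ : ℕ∞) Φ (z.1, z.2.2) :=
      hΦ.contDiffAt ((hΘ.prod hΛ).mem_nhds hmem1)
    have hΦ2 : ContDiffAt ℝ (⊤ : ℕ∞) Φ (z.2.1, z.2.2) :=
      hΦ.contDiffAt ((hΘ.prod hΛ).mem_nhds hmem2)
    exact (hΦ1.comp z hj1.contDiffAt).sub (hΦ2.comp z hj2.contDiffAt)
  have hfz0 : ∀ x ∈ Z, f x = 0 := fun x hx => hx.2
  -- local dimension bound at each point of Z
  have hloc : ∀ z ∈ Z, ∃ W, IsOpen W ∧ z ∈ W ∧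
      dimH (π '' (Z ∩ W)) ≤ ((q - 1 : ℕ) : ℝ≥0∞) ∧ 0 < q := by
    intro z hz
    have hcd := hfcd z hz.1
    have hsurj : Function.Surjective (fderiv ℝ f z) :=
      hreg z hz.1.1 hz.1.2.1 hz.1.2.2.1 hz.1.2.2.2 hz.2
    -- rank-nullity
    have hrange : (fderiv ℝ f z).range = ⊤ := LinearMap.range_eq_top.2 hsurj
    have hrn := LinearMap.finrank_range_add_finrank_ker
      ((fderiv ℝ f z) : E →ₗ[ℝ] (Fin (K + 1) → ℝ))
    have hrangeL : LinearMap.range ((fderiv ℝ f z) : E →ₗ[ℝ] (Fin (K + 1) → ℝ)) = ⊤ := by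
      rw [LinearMap.range_eq_top]
      exact hsurj
    rw [hrangeL, finrank_top] at hrn
    have hfinE : finrank ℝ E = p + (p + q) := by
      simp [E, Module.finrank_prod, Module.finrank_fin_fun]
    have hfinF : finrank ℝ (Fin (K + 1) → ℝ) = K + 1 := Module.finrank_fin_fun ℝ
    rw [hfinE, hfinF] at hrn
    have hkereq : finrank ℝ (LinearMap.ker ((fderiv ℝ f z) : E →ₗ[ℝ] (Fin (K + 1) → ℝ)))
        = finrank ℝ (fderiv ℝ f z).ker := rfl
    rw [hkereq] at hrn
    have hq : 0 < q := by omega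
    have hker : finrank ℝ (fderiv ℝ f z).ker ≤ q - 1 := by omega
    obtain ⟨W, hWopen, hzW, hdim⟩ :=
      aux_local_dimH f
        ((ContinuousLinearMap.snd ℝ (Fin p → ℝ) (Fin q → ℝ)).comp
          (ContinuousLinearMap.snd ℝ (Fin p → ℝ) ((Fin p → ℝ) × (Fin q → ℝ))))
        Z z hfz0 hz.2 hcd hsurj (q - 1) hker
    exact ⟨W, hWopen, hzW, hdim, hq⟩
  -- global dimension bound via a countable subcover
  have hdimZ : Z = ∅ ∨ (dimH (π '' Z) ≤ ((q - 1 : ℕ) : ℝ≥0∞) ∧ 0 < q) := by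
    rcases eq_empty_or_nonempty Z with hZe | hZne
    · exact Or.inl hZe
    · refine Or.inr ?_
      choose W hWopen hzW hdim hq using hloc
      obtain ⟨z₀, hz₀⟩ := hZne
      have hq0 : 0 < q := hq z₀ hz₀
      obtain ⟨T, hTc, hTeq⟩ := TopologicalSpace.isOpen_iUnion_countable
        (fun z : Z => W z z.2) (fun z => hWopen z z.2)
      have hZcover : Z ⊆ ⋃ z ∈ T, W (z : E) z.2 := by
        rw [hTeq]
        intro x hx
        exact Set.mem_iUnion.2 ⟨⟨x, hx⟩, hzW x hx⟩
      have himg : π '' Z ⊆ ⋃ z ∈ T, π '' (Z ∩ W (z : E) z.2) := by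
        rintro y ⟨x, hxZ, rfl⟩
        obtain ⟨z, hzT, hxW⟩ := Set.mem_iUnion₂.1 (hZcover hxZ)
        exact Set.mem_iUnion₂.2 ⟨z, hzT, ⟨x, ⟨hxZ, hxW⟩, rfl⟩⟩
      refine ⟨le_trans (dimH_mono himg) ?_, hq0⟩
      rw [dimH_bUnion hTc]
      exact iSup₂_le fun z _ => hdim z z.2
  -- Z is σ-compact: exhaustion by compact sets
  have hfc : ContinuousOn f U := fun x hx =>
    (hfcd x hx).continuousAt.continuousWithinAt
  set A : ℕ → Set E := fun n =>
    {x | ∀ y ∈ Uᶜ, (1 : ℝ) / (n + 1) ≤ dist x y} with hAdef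
  set C : ℕ → Set E := fun n =>
    closure Z ∩ A n ∩ Metric.closedBall 0 n with hCdef
  have hAclosed : ∀ n, IsClosed (A n) := by
    intro n
    have : A n = ⋂ y ∈ Uᶜ, {x : E | (1 : ℝ) / (n + 1) ≤ dist x y} := by
      ext x; simp [hAdef]
    rw [this]
    exact isClosed_biInter fun y _ =>
      isClosed_le continuous_const (continuous_id.dist continuous_const)
  have hAU : ∀ n, A n ⊆ U := by
    intro n x hx
    by_contra hxU
    have := hx x hxU
    rw [dist_self] at this
    have hpos : (0 : ℝ) < 1 / (n + 1) := by positivity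
    linarith
  have hCZ : ∀ n, C n ⊆ Z := by
    intro n x hx
    have hxU : x ∈ U := hAU n hx.1.2
    have hxcl : x ∈ closure Z := hx.1.1
    have hcont : ContinuousAt f x := (hfcd x hxU).continuousAt
    have hfx : f x ∈ closure (f '' Z) := by
      have : ContinuousWithinAt f Z x := hcont.continuousWithinAt
      exact this.mem_closure_image hxcl
    have hfim : f '' Z ⊆ {0} := by
      rintro _ ⟨w, hw, rfl⟩
      exact hfz0 w hw
    have : f x ∈ closure ({0} : Set (Fin (K + 1) → ℝ)) :=
      closure_mono hfim hfx
    rw [closure_singleton] at this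
    exact ⟨hxU, this⟩
  have hCcomp : ∀ n, IsCompact (C n) := by
    intro n
    apply Metric.isCompact_of_isClosed_isBounded
    · exact (isClosed_closure.inter (hAclosed n)).inter Metric.isClosed_closedBall
    · exact Metric.isBounded_closedBall.subset Set.inter_subset_right
  have hZC : Z ⊆ ⋃ n, C n := by
    intro x hx
    have hxU : x ∈ U := hx.1
    obtain ⟨ε, hε, hball⟩ := Metric.isOpen_iff.1 hUopen x hxU
    obtain ⟨n₁, hn₁⟩ := exists_nat_one_div_lt hε
    obtain ⟨n₂, hn₂⟩ := exists_nat_ge ‖x‖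
    refine Set.mem_iUnion.2 ⟨max n₁ n₂, ⟨subset_closure hx, ?_⟩, ?_⟩
    · intro y hy
      by_contra hlt
      push_neg at hlt
      have h1 : (1 : ℝ) / (max n₁ n₂ + 1) ≤ 1 / (n₁ + 1) := by
        apply one_div_le_one_div_of_le
        · positivity
        · have hcast : (n₁ : ℝ) ≤ ((max n₁ n₂ : ℕ) : ℝ) := Nat.cast_le.2 (le_max_left n₁ n₂)
          linarith
      have h2 : dist x y < ε := lt_of_lt_of_le (lt_of_lt_of_le hlt h1) hn₁.le
      have : y ∈ U := hball (by rwa [Metric.mem_ball, dist_comm])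
      exact hy this
    · rw [Metric.mem_closedBall, dist_zero_right]
      calc ‖x‖ ≤ n₂ := hn₂
        _ ≤ max n₁ n₂ := by exact_mod_cast le_max_right n₁ n₂
  -- each projected piece is closed and nowhere dense
  have hmeagre : IsMeagre B := by
    rcases hdimZ with hZe | ⟨hdim, hq⟩
    · have : B = ∅ := by
        apply Set.eq_empty_of_subset_empty
        intro l hl
        have := hBZ hl
        rw [hZe] at this
        simp at this
      rw [this]
      exact IsMeagre.empty
    · rw [isMeagre_iff_countable_union_isNowhereDense]
      refine ⟨Set.range (fun n => π '' C n), ?_, Set.countable_range _, ?_⟩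
      · rintro _ ⟨n, rfl⟩
        have hcomp : IsCompact (π '' C n) := by
          apply (hCcomp n).image
          exact (continuous_snd.comp continuous_snd)
        have hclosed : IsClosed (π '' C n) := hcomp.isClosed
        have hdimn : dimH (π '' C n) < (finrank ℝ (Fin q → ℝ) : ℝ≥0∞) := by
          have h1 : dimH (π '' C n) ≤ ((q - 1 : ℕ) : ℝ≥0∞) :=
            le_trans (dimH_mono (Set.image_mono (hCZ n))) hdim
          have h2 : ((q - 1 : ℕ) : ℝ≥0∞) < (q : ℝ≥0∞) := by
            exact_mod_cast Nat.sub_lt hq Nat.one_pos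
          have h3 : (finrank ℝ (Fin q → ℝ) : ℝ≥0∞) = (q : ℝ≥0∞) := by
            rw [Module.finrank_fin_fun]
          rw [h3]
          exact lt_of_le_of_lt h1 h2
        have hdense : Dense (π '' C n)ᶜ := dense_compl_of_dimH_lt_finrank hdimn
        rw [IsNowhereDense, hclosed.closure_eq]
        rwa [interior_eq_empty_iff_dense_compl]
      · intro l hl
        obtain ⟨x, hxZ, hπx⟩ := hBZ hl
        obtain ⟨n, hn⟩ := Set.mem_iUnion.1 (hZC hxZ)
        rw [Set.sUnion_range]
        exact Set.mem_iUnion.2 ⟨n, ⟨x, hn, hπx⟩⟩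
  have : Bᶜ = {l : Fin q → ℝ | l ∈ Λ → Set.InjOn (fun θ => Φ (θ, l)) Θ} := by
    ext l
    simp only [hBdef, Set.mem_compl_iff, Set.mem_setOf_eq, not_and, not_not]
  rw [← this]
  exact hmeagre
end

section
/- Let p(x) = (x √(2π))⁻¹ exp(−(log x)²/2) for x > 0 be the density of the standard log-normal distribution. Then for every natural number n, ∫₀^∞ xⁿ sin(2π log x) p(x) dx = 0. -/
open Real MeasureTheory

/-- The density of the standard log-normal distribution on `(0, ∞)`. -/
noncomputable def logNormalDensity (x : ℝ) : ℝ :=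
  (x * Real.sqrt (2 * Real.pi))⁻¹ * Real.exp (-(Real.log x) ^ 2 / 2)

/-- **Log-normal moment cancellation.** Every moment of the Stieltjes
perturbation `sin(2π log x)` against the standard log-normal density
vanishes. -/
theorem lognormal_stieltjes_moments_vanish (n : ℕ) :
    ∫ x in Set.Ioi (0 : ℝ),
      x ^ n * Real.sin (2 * Real.pi * Real.log x) * logNormalDensity x = 0 := by
  -- Substitute x = exp y
  have himg : Real.exp '' Set.univ = Set.Ioi (0 : ℝ) := by
    rw [Set.image_univ, Real.range_exp]
  have hsub :
      ∫ x in Set.Ioi (0 : ℝ),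
        x ^ n * Real.sin (2 * Real.pi * Real.log x) * logNormalDensity x
      = ∫ y : ℝ, |Real.exp y| •
          ((Real.exp y) ^ n * Real.sin (2 * Real.pi * Real.log (Real.exp y)) *
            logNormalDensity (Real.exp y)) := by
    rw [← himg,
      integral_image_eq_integral_abs_deriv_smul MeasurableSet.univ
        (fun x _ => (Real.hasDerivAt_exp x).hasDerivWithinAt)
        (Real.exp_injective.injOn) _,
      Measure.restrict_univ]
  rw [hsub]
  -- Simplify the integrand on ℝ
  have hA : ∀ y : ℝ,
      |Real.exp y| •
          ((Real.exp y) ^ n * Real.sin (2 * Real.pi * Real.log (Real.exp y)) *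
            logNormalDensity (Real.exp y))
      = (Real.exp ((n : ℝ) ^ 2 / 2) * (Real.sqrt (2 * Real.pi))⁻¹) *
          (Real.sin (2 * Real.pi * y) * Real.exp (-(y - n) ^ 2 / 2)) := by
    intro y
    have hy : (0 : ℝ) < Real.exp y := Real.exp_pos y
    rw [abs_of_pos hy, smul_eq_mul, logNormalDensity, Real.log_exp,
      ← Real.exp_nat_mul, mul_inv]
    have hexp : Real.exp ((n : ℝ) * y) * Real.exp (-y ^ 2 / 2)
        = Real.exp ((n : ℝ) ^ 2 / 2) * Real.exp (-(y - n) ^ 2 / 2) := by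
      rw [← Real.exp_add, ← Real.exp_add]; ring_nf
    have key : Real.exp y * (Real.exp ((n : ℝ) * y) * Real.sin (2 * Real.pi * y) *
          ((Real.exp y)⁻¹ * (Real.sqrt (2 * Real.pi))⁻¹ * Real.exp (-y ^ 2 / 2)))
        = (Real.exp y * (Real.exp y)⁻¹) * ((Real.sqrt (2 * Real.pi))⁻¹ *
          (Real.sin (2 * Real.pi * y) * (Real.exp ((n : ℝ) * y) * Real.exp (-y ^ 2 / 2)))) := by
      ring
    rw [key, mul_inv_cancel₀ (ne_of_gt hy), one_mul, hexp]
    ring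
  simp only [hA]
  rw [integral_const_mul]
  -- Shift: y = t + n
  have hshift : ∫ y : ℝ, Real.sin (2 * Real.pi * y) * Real.exp (-(y - n) ^ 2 / 2)
      = ∫ t : ℝ, Real.sin (2 * Real.pi * t) * Real.exp (-t ^ 2 / 2) := by
    rw [← integral_add_right_eq_self
      (fun y => Real.sin (2 * Real.pi * y) * Real.exp (-(y - n) ^ 2 / 2)) (n : ℝ)]
    congr 1
    ext t
    have hsin : Real.sin (2 * Real.pi * (t + n)) = Real.sin (2 * Real.pi * t) := by
      have : 2 * Real.pi * (t + n) = 2 * Real.pi * t + n * (2 * Real.pi) := by ring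
      rw [this, Real.sin_add_nat_mul_two_pi]
    simp only [add_sub_cancel_right, hsin]
  rw [hshift]
  -- Oddness
  have hodd : ∫ t : ℝ, Real.sin (2 * Real.pi * t) * Real.exp (-t ^ 2 / 2) = 0 := by
    have h := integral_neg_eq_self
      (fun t => Real.sin (2 * Real.pi * t) * Real.exp (-t ^ 2 / 2)) (volume : Measure ℝ)
    have h2 : ∫ t : ℝ, Real.sin (2 * Real.pi * -t) * Real.exp (-(-t) ^ 2 / 2)
        = ∫ t : ℝ, -(Real.sin (2 * Real.pi * t) * Real.exp (-t ^ 2 / 2)) := by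
      congr 1; ext t
      rw [mul_neg, Real.sin_neg]; ring_nf
    rw [h2, integral_neg] at h
    linarith
  rw [hodd, mul_zero]
end

section
/- For every real number t, ∫_{−∞}^{∞} exp(t y − y²/2) sin(2π y) dy = √(2π) · exp(t²/2 − 2π²) · sin(2π t). In particular the integral vanishes exactly when sin(2πt) = 0, i.e. when t is a half-integer multiple (2t is an integer). -/
open Real MeasureTheory Complex

lemma gaussian_sine_integral_main (t : ℝ) :
    (∫ y : ℝ, Real.exp (t * y - y ^ 2 / 2) * Real.sin (2 * Real.pi * y)) =
        Real.sqrt (2 * Real.pi) * Real.exp (t ^ 2 / 2 - 2 * Real.pi ^ 2) *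
          Real.sin (2 * Real.pi * t) := by
  have hb : ((-(1/2) : ℂ)).re < 0 := by norm_num
  have hint := integrable_cexp_quadratic' hb ((t : ℂ) + 2 * Real.pi * Complex.I) 0
  have hval := integral_cexp_quadratic hb ((t : ℂ) + 2 * Real.pi * Complex.I) 0
  have him : ∀ y : ℝ,
      (Complex.exp ((-(1/2) : ℂ) * y ^ 2 + ((t : ℂ) + 2 * Real.pi * Complex.I) * y + 0)).im
        = Real.exp (t * y - y ^ 2 / 2) * Real.sin (2 * Real.pi * y) := by
    intro y
    have : (-(1/2) : ℂ) * y ^ 2 + ((t : ℂ) + 2 * Real.pi * Complex.I) * y + 0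
        = ((t * y - y ^ 2 / 2 : ℝ) : ℂ) + ((2 * Real.pi * y : ℝ) : ℂ) * Complex.I := by
      push_cast; ring
    rw [this]
    simp only [Complex.exp_im, Complex.exp_re, Complex.add_re, Complex.add_im,
      Complex.ofReal_re, Complex.ofReal_im, Complex.mul_re, Complex.mul_im,
      Complex.I_re, Complex.I_im, mul_zero, mul_one, zero_mul, sub_zero, zero_add, add_zero]
  calc (∫ y : ℝ, Real.exp (t * y - y ^ 2 / 2) * Real.sin (2 * Real.pi * y))
      = ∫ y : ℝ, (Complex.exp ((-(1/2) : ℂ) * y ^ 2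
          + ((t : ℂ) + 2 * Real.pi * Complex.I) * y + 0)).im := by
        simp_rw [him]
    _ = (∫ y : ℝ, Complex.exp ((-(1/2) : ℂ) * y ^ 2
          + ((t : ℂ) + 2 * Real.pi * Complex.I) * y + 0)).im := by
        simpa only [RCLike.im_to_complex] using integral_im hint
    _ = Real.sqrt (2 * Real.pi) * Real.exp (t ^ 2 / 2 - 2 * Real.pi ^ 2) *
          Real.sin (2 * Real.pi * t) := by
        rw [hval]
        have h1 : ((Real.pi : ℂ) / -(-(1/2)) : ℂ) = ((2 * Real.pi : ℝ) : ℂ) := by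
          push_cast; ring
        have h2 : (((2 * Real.pi : ℝ) : ℂ)) ^ (1 / 2 : ℂ)
            = ((Real.sqrt (2 * Real.pi) : ℝ) : ℂ) := by
          rw [show (1/2 : ℂ) = ((1/2 : ℝ) : ℂ) by norm_num,
            ← Complex.ofReal_cpow (by positivity)]
          norm_num [Real.sqrt_eq_rpow]
        have h3 : (0 : ℂ) - ((t : ℂ) + 2 * Real.pi * Complex.I) ^ 2 / (4 * (-(1/2)))
            = ((t ^ 2 / 2 - 2 * Real.pi ^ 2 : ℝ) : ℂ)
              + ((2 * Real.pi * t : ℝ) : ℂ) * Complex.I := by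
          push_cast
          linear_combination (2 * (Real.pi : ℂ) ^ 2) * Complex.I_sq
        rw [h1, h2, h3]
        simp only [Complex.exp_im, Complex.exp_re, Complex.add_re, Complex.add_im,
          Complex.ofReal_re, Complex.ofReal_im, Complex.mul_re, Complex.mul_im,
          Complex.I_re, Complex.I_im, mul_zero, mul_one, zero_mul, sub_zero, zero_add,
          add_zero, zero_sub, neg_zero]
        ring

/-- **Shifted Gaussian–sine integral.** For every real `t`,
`∫ exp(t y − y²/2) sin(2π y) dy = √(2π) exp(t²/2 − 2π²) sin(2π t)`;
in particular the integral vanishes exactly when `sin(2π t) = 0`. -/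
theorem gaussian_sine_integral (t : ℝ) :
    (∫ y : ℝ, Real.exp (t * y - y ^ 2 / 2) * Real.sin (2 * Real.pi * y)) =
        Real.sqrt (2 * Real.pi) * Real.exp (t ^ 2 / 2 - 2 * Real.pi ^ 2) *
          Real.sin (2 * Real.pi * t) ∧
      ((∫ y : ℝ, Real.exp (t * y - y ^ 2 / 2) * Real.sin (2 * Real.pi * y)) = 0 ↔
        Real.sin (2 * Real.pi * t) = 0) := by
  have h := gaussian_sine_integral_main t
  refine ⟨h, ?_⟩
  rw [h]
  constructor
  · intro h0
    have hpos : Real.sqrt (2 * Real.pi) * Real.exp (t ^ 2 / 2 - 2 * Real.pi ^ 2) > 0 := by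
      positivity
    rcases mul_eq_zero.mp h0 with h1 | h1
    · exact absurd h1 hpos.ne'
    · exact h1
  · intro h0; rw [h0, mul_zero]
end

section
/- Let p(x) = (x √(2π))⁻¹ exp(−(log x)²/2) for x > 0 be the density of the standard log-normal distribution, and for a ∈ [−1, 1] define q_a(x) = (1 + a sin(2π log x)) p(x) on (0, ∞). Then: (i) q_a(x) ≥ 0 for all x > 0; (ii) ∫₀^∞ q_a(x) dx = 1, so q_a is a probability density; and (iii) for every natural number n, ∫₀^∞ xⁿ q_a(x) dx = exp(n²/2), independently of a. Hence all members of the family {q_a : a ∈ [−1, 1]} have the same moment sequence as the log-normal distribution. -/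
open Real MeasureTheory

/-- A member of the Stieltjes class of the log-normal distribution. -/
noncomputable def stieltjesDensity (a x : ℝ) : ℝ :=
  (1 + a * Real.sin (2 * Real.pi * Real.log x)) * logNormalDensity x

/-!
Substituting `x = eʸ` turns `q_a(x) dx` into `(1 + a sin 2πy) φ(y) dy` with `φ` the standard
Gaussian density. Multiplying `φ(y)` by `xⁿ = e^{ny}` gives `e^{n²/2} φ(y - n)`, and since `n` is an
integer the factor `1 + a sin 2πy` does not see the shift; so the `n`-th moment is `e^{n²/2}` times
the total mass. The total mass is `1`, because `sin 2πy · φ(y)` is odd.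
-/

open ProbabilityTheory

section

variable {E : Type*} [NormedAddCommGroup E] [NormedSpace ℝ E]

theorem integral_Ioi_zero_eq_integral_exp_smul (g : ℝ → E) :
    ∫ x in Set.Ioi (0 : ℝ), g x = ∫ y, exp y • g (exp y) := by
  rw [← Real.range_exp, ← Set.image_univ,
    integral_image_eq_integral_abs_deriv_smul MeasurableSet.univ
      (fun x _ => (Real.hasDerivAt_exp x).hasDerivWithinAt) Real.exp_injective.injOn g,
    setIntegral_univ]
  simp [abs_of_pos (Real.exp_pos _)]

theorem Function.Odd.integral_eq_zero {f : ℝ → E} (hf : f.Odd) : ∫ x, f x = 0 := by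
  have h := integral_neg_eq_self f volume
  simp only [hf.eq, integral_neg] at h
  rw [neg_eq_iff_add_eq_zero, ← two_smul ℝ] at h
  exact (smul_eq_zero.mp h).resolve_left two_ne_zero

end

theorem gaussianPDFReal_zero_even (v : NNReal) : (gaussianPDFReal 0 v).Even :=
  fun x => by simp [gaussianPDFReal]

theorem exp_mul_mul_gaussianPDFReal (m μ : ℝ) (v : NNReal) (x : ℝ) :
    exp (m * x) * gaussianPDFReal μ v x =
      exp (m * μ + m ^ 2 * v / 2) * gaussianPDFReal (μ + m * v) v x := by
  rcases eq_or_ne v 0 with rfl | hv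
  · simp
  simp only [gaussianPDFReal]
  rw [mul_left_comm, ← exp_add, mul_left_comm (exp _), ← exp_add]
  congr 2
  field_simp
  ring

theorem exp_mul_stieltjesDensity_exp (a y : ℝ) :
    exp y * stieltjesDensity a (exp y) = (1 + a * sin (2 * π * y)) * gaussianPDFReal 0 1 y := by
  simp only [stieltjesDensity, logNormalDensity, gaussianPDFReal, log_exp, NNReal.coe_one, mul_one,
    sub_zero]
  field_simp

theorem integral_stieltjesDensity (a : ℝ) : ∫ x in Set.Ioi (0 : ℝ), stieltjesDensity a x = 1 := by
  have hodd : (fun y => sin (2 * π * y) * gaussianPDFReal 0 1 y).Odd :=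
    Function.Odd.mul_even (fun y => by simp [mul_neg, sin_neg]) (gaussianPDFReal_zero_even 1)
  have hint : Integrable (fun y => sin (2 * π * y) * gaussianPDFReal 0 1 y) :=
    (integrable_gaussianPDFReal 0 1).bdd_mul (c := 1) (by fun_prop)
      (Filter.Eventually.of_forall fun y => by simpa using abs_sin_le_one _)
  simp only [integral_Ioi_zero_eq_integral_exp_smul, smul_eq_mul, exp_mul_stieltjesDensity_exp,
    add_mul, one_mul, mul_assoc a]
  rw [integral_add (integrable_gaussianPDFReal 0 1) (hint.const_mul a), integral_const_mul,
    integral_gaussianPDFReal_eq_one 0 one_ne_zero, hodd.integral_eq_zero, mul_zero, add_zero]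

theorem exp_mul_pow_mul_stieltjesDensity_exp (a y : ℝ) (n : ℕ) :
    exp y * (exp y ^ n * stieltjesDensity a (exp y)) =
      exp ((n : ℝ) ^ 2 / 2) * (exp (y - n) * stieltjesDensity a (exp (y - n))) := by
  have hsin : sin (2 * π * (y - n)) = sin (2 * π * y) := by
    rw [mul_sub, ← sin_sub_nat_mul_two_pi (2 * π * y) n]
    ring_nf
  rw [mul_left_comm, exp_mul_stieltjesDensity_exp, exp_mul_stieltjesDensity_exp, hsin,
    ← exp_nat_mul, mul_left_comm, exp_mul_mul_gaussianPDFReal, gaussianPDFReal_sub]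
  simp only [NNReal.coe_one, mul_one, zero_add, mul_zero]
  ring

theorem integral_pow_mul_stieltjesDensity (a : ℝ) (n : ℕ) :
    ∫ x in Set.Ioi (0 : ℝ), x ^ n * stieltjesDensity a x =
      exp ((n : ℝ) ^ 2 / 2) * ∫ x in Set.Ioi (0 : ℝ), stieltjesDensity a x := by
  simp only [integral_Ioi_zero_eq_integral_exp_smul, smul_eq_mul,
    exp_mul_pow_mul_stieltjesDensity_exp, integral_const_mul]
  rw [integral_sub_right_eq_self (fun y => exp y * stieltjesDensity a (exp y))]

theorem stieltjesDensity_nonneg {a x : ℝ} (ha : a ∈ Set.Icc (-1 : ℝ) 1) (hx : 0 ≤ x) :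
    0 ≤ stieltjesDensity a x := by
  have hsin : |a * sin (2 * π * log x)| ≤ 1 := by
    rw [abs_mul]
    exact mul_le_one₀ (abs_le.mpr ha) (abs_nonneg _) (abs_sin_le_one _)
  exact mul_nonneg (by linarith [neg_le_of_abs_le hsin]) (by unfold logNormalDensity; positivity)

/-- **The Stieltjes class of the log-normal.** For `a ∈ [−1, 1]`, the function
`q_a(x) = (1 + a sin(2π log x)) p(x)` is a probability density on `(0, ∞)`
whose `n`-th moment is `exp(n²/2)`, independently of `a`.  Hence all members
of the family share the moment sequence of the log-normal distribution. -/
theorem stieltjes_class_lognormal (a : ℝ) (ha : a ∈ Set.Icc (-1 : ℝ) 1) :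
    (∀ x : ℝ, 0 < x → 0 ≤ stieltjesDensity a x) ∧
      (∫ x in Set.Ioi (0 : ℝ), stieltjesDensity a x = 1) ∧
      (∀ n : ℕ, ∫ x in Set.Ioi (0 : ℝ), x ^ n * stieltjesDensity a x =
        Real.exp ((n : ℝ) ^ 2 / 2)) :=
  ⟨fun _ hx => stieltjesDensity_nonneg ha hx.le, integral_stieltjesDensity a,
    fun n => by rw [integral_pow_mul_stieltjesDensity, integral_stieltjesDensity, mul_one]⟩
end
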